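/- arXiv:2205.09304 — 4 statements merged into one kernel-verified Lean document; each statement's English description precedes it below -/
import Mathlib

section
/- Let n ≥ 2 and m ≥ 2 be integers with m ≤ (2/3)n, and let t : ℕ → ℕ with t_k = 0 unless 2 ≤ k ≤ m. Suppose n(n-1) = Σ_{k=2}^{m} k(k-1) t_k, f = 1 + Σ_{k=2}^{m} (k-1) t_k, and Bojanowski's inequality holds: t₂ + (3/4)t₃ + Σ_{k=5}^{m} (k - k²/4) t_k ≥ n. Then f ≥ ((m+2)n² + (3m-6)n)/(6m) + 1. -/
/-!
Take the combination `f - 1 - λ·n(n-1) - μ·n` of the counting identities and Bojanowski's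
inequality with `λ = (m+2)/(6m)` and `μ = 2(m-1)/(3m)`. The coefficient of `t_k` in it is
`(k-2)(m-k)/(2m)`, nonnegative for `2 ≤ k ≤ m`, so `f - 1 ≥ λ·n(n-1) + μ·n`, which is the bound.
-/

open Finset

lemma sum_Icc_eq_add_sum_Icc_succ {M : Type*} [AddCommMonoid M] (g : ℕ → M) {a b : ℕ}
    (hab : a ≤ b) : ∑ k ∈ Icc a b, g k = g a + ∑ k ∈ Icc (a + 1) b, g k := by
  rw [← add_sum_Ioc_eq_sum_Icc hab, Icc_add_one_left_eq_Ioc]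

lemma sub_one_sub_weighted_eq (k m : ℝ) (hm : m ≠ 0) :
    (k - 1) - ((m + 2) / (6 * m) * (k * (k - 1)) + 2 * (m - 1) / (3 * m) * (k - k ^ 2 / 4))
      = (k - 2) * (m - k) / (2 * m) := by
  field_simp
  ring

lemma weighted_le_sub_one {k m : ℝ} (hk : 2 ≤ k) (hkm : k ≤ m) :
    (m + 2) / (6 * m) * (k * (k - 1)) + 2 * (m - 1) / (3 * m) * (k - k ^ 2 / 4) ≤ k - 1 := by
  have hm : 0 < m := by linarith
  have hgap := sub_one_sub_weighted_eq k m hm.ne'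
  have hgap_nonneg : 0 ≤ (k - 2) * (m - k) / (2 * m) := by
    apply div_nonneg <;> nlinarith
  linarith

lemma weighted_sum_le_sum_sub_one_mul {m : ℕ} (t : ℕ → ℝ) (ht : ∀ k, 0 ≤ t k) :
    (m + 2) / (6 * m) * ∑ k ∈ Icc 2 m, (k : ℝ) * (k - 1) * t k
      + 2 * (m - 1) / (3 * m) * ∑ k ∈ Icc 2 m, ((k : ℝ) - (k : ℝ) ^ 2 / 4) * t k
      ≤ ∑ k ∈ Icc 2 m, ((k : ℝ) - 1) * t k := by
  rw [mul_sum, mul_sum, ← sum_add_distrib]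
  refine sum_le_sum fun k hk => ?_
  obtain ⟨h2k, hkm⟩ := mem_Icc.mp hk
  have hterm := mul_le_mul_of_nonneg_right
    (weighted_le_sub_one (k := k) (m := m) (by exact_mod_cast h2k) (by exact_mod_cast hkm)) (ht k)
  linarith

-- The weight `k - k^2/4` equals `1`, `3/4`, `0` at `k = 2, 3, 4`.
lemma bojanowski_sum_eq_sum_Icc {m : ℕ} (hm : 2 ≤ m) (t : ℕ → ℝ) (ht3 : m = 2 → t 3 = 0) :
    t 2 + 3 / 4 * t 3 + ∑ k ∈ Icc 5 m, ((k : ℝ) - (k : ℝ) ^ 2 / 4) * t k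
      = ∑ k ∈ Icc 2 m, ((k : ℝ) - (k : ℝ) ^ 2 / 4) * t k := by
  rcases (by omega : m = 2 ∨ m = 3 ∨ 4 ≤ m) with rfl | rfl | h4
  · norm_num [ht3 rfl]
  · norm_num [sum_Icc_eq_add_sum_Icc_succ _ (by norm_num : 2 ≤ 3)]
  · rw [sum_Icc_eq_add_sum_Icc_succ _ (by omega : 2 ≤ m),
      sum_Icc_eq_add_sum_Icc_succ _ (by omega : 3 ≤ m),
      sum_Icc_eq_add_sum_Icc_succ _ h4]
    norm_num
    ring

theorem stmt3_general (n m f : ℕ) (hm : 2 ≤ m)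
    (t : ℕ → ℕ) (ht0 : ∀ k, ¬(2 ≤ k ∧ k ≤ m) → t k = 0)
    (hpairs : (n : ℝ) * (n - 1) = ∑ k ∈ Finset.Icc 2 m, (k : ℝ) * (k - 1) * t k)
    (hf : (f : ℝ) = 1 + ∑ k ∈ Finset.Icc 2 m, ((k : ℝ) - 1) * t k)
    (hboj : (n : ℝ) ≤ t 2 + (3 / 4) * t 3
      + ∑ k ∈ Finset.Icc 5 m, ((k : ℝ) - (k : ℝ) ^ 2 / 4) * t k) :
    ((m + 2) * (n : ℝ) ^ 2 + (3 * m - 6) * n) / (6 * m) + 1 ≤ (f : ℝ) := by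
  have hmR : (2 : ℝ) ≤ m := by exact_mod_cast hm
  rw [bojanowski_sum_eq_sum_Icc hm (fun k => (t k : ℝ))
    fun h => by simp [ht0 3 (by omega)]] at hboj
  have hweighted := weighted_sum_le_sum_sub_one_mul (m := m) (fun k => (t k : ℝ))
    fun k => Nat.cast_nonneg _
  rw [← hpairs] at hweighted
  have hmu : 0 ≤ 2 * ((m : ℝ) - 1) / (3 * m) := div_nonneg (by linarith) (by linarith)
  have hval : ((m + 2) * (n : ℝ) ^ 2 + (3 * m - 6) * n) / (6 * m)
      = (m + 2) / (6 * m) * (n * (n - 1)) + 2 * (m - 1) / (3 * m) * n := by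
    field_simp
    ring
  rw [hval, hf]
  linarith [mul_le_mul_of_nonneg_left hboj hmu]

theorem stmt3 (n m f : ℕ) (hn : 2 ≤ n) (hm : 2 ≤ m) (hmn : (m : ℝ) ≤ 2 / 3 * n)
    (t : ℕ → ℕ) (ht0 : ∀ k, ¬(2 ≤ k ∧ k ≤ m) → t k = 0)
    (hpairs : (n : ℝ) * (n - 1) = ∑ k ∈ Finset.Icc 2 m, (k : ℝ) * (k - 1) * t k)
    (hf : (f : ℝ) = 1 + ∑ k ∈ Finset.Icc 2 m, ((k : ℝ) - 1) * t k)
    (hboj : (n : ℝ) ≤ t 2 + (3 / 4) * t 3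
      + ∑ k ∈ Finset.Icc 5 m, ((k : ℝ) - (k : ℝ) ^ 2 / 4) * t k) :
    ((m + 2) * (n : ℝ) ^ 2 + (3 * m - 6) * n) / (6 * m) + 1 ≤ (f : ℝ) :=
  stmt3_general n m f hm t ht0 hpairs hf hboj
end

section
/- Let n ≥ 2 and m ≥ 2 be integers with m ≤ (2/3)n, and let t : ℕ → ℕ with t_k = 0 unless 2 ≤ k ≤ m. Suppose n(n-1) = Σ_{k=2}^{m} k(k-1) t_k, f = 1 + Σ_{k=2}^{m} (k-1) t_k, and t₂ + (3/4)t₃ + Σ_{k=5}^{m} (k - k²/4) t_k ≥ n. Then f ≥ n²/6. -/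
/-!
Write `B = ∑ₖ (k - k²/4) tₖ` for the Bojanowski sum (the weight of `k = 4` vanishes) and
`P = ∑ₖ k(k-1) tₖ = n(n-1)`. The pointwise identity `k/2 = k(k-1)/6 + (2/3)(k - k²/4)` together
with `k/2 ≤ k - 1` for `k ≥ 2` gives `f - 1 ≥ P/6 + (2/3) B ≥ n(n-1)/6 + 2n/3 ≥ n²/6`.
-/

open Finset

namespace LineArrangement

lemma sum_Icc_eq_sum_Icc_of_eq_zero {M : Type*} [AddCommMonoid M] {g : ℕ → M} {a m N : ℕ}
    (hmN : m ≤ N) (hg : ∀ k, m < k → g k = 0) :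
    ∑ k ∈ Icc a m, g k = ∑ k ∈ Icc a N, g k :=
  sum_subset (Icc_subset_Icc_right hmN) fun k hkN hkm => hg k <| by
    simp only [mem_Icc] at hkN hkm
    omega

lemma sum_Icc_eq_add_sum_Icc_succ {M : Type*} [AddCommMonoid M] (g : ℕ → M) {a b : ℕ}
    (hab : a ≤ b) : ∑ k ∈ Icc a b, g k = g a + ∑ k ∈ Icc (a + 1) b, g k := by
  rw [Icc_add_one_left_eq_Ioc, add_sum_Ioc_eq_sum_Icc hab]

noncomputable def bojanowskiWeight (k : ℕ) : ℝ := k - (k : ℝ) ^ 2 / 4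

lemma sum_bojanowskiWeight_eq {m : ℕ} {t : ℕ → ℕ} (ht : ∀ k, m < k → t k = 0) :
    ∑ k ∈ Icc 2 m, bojanowskiWeight k * t k
      = t 2 + (3 / 4) * t 3 + ∑ k ∈ Icc 5 m, bojanowskiWeight k * t k := by
  have hvanish : ∀ k, m < k → bojanowskiWeight k * t k = 0 := fun k hk => by simp [ht k hk]
  rw [sum_Icc_eq_sum_Icc_of_eq_zero (Nat.le_add_right m 4) hvanish,
    sum_Icc_eq_sum_Icc_of_eq_zero (Nat.le_add_right m 4) hvanish,
    sum_Icc_eq_add_sum_Icc_succ _ (by omega), sum_Icc_eq_add_sum_Icc_succ _ (by omega),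
    sum_Icc_eq_add_sum_Icc_succ _ (by omega)]
  norm_num [bojanowskiWeight, add_assoc]

lemma pairs_div_six_add_bojanowskiWeight_le {k : ℕ} (hk : 2 ≤ k) :
    (k : ℝ) * (k - 1) / 6 + 2 / 3 * bojanowskiWeight k ≤ k - 1 := by
  have hk' : (2 : ℝ) ≤ k := by exact_mod_cast hk
  rw [bojanowskiWeight]
  linarith

end LineArrangement

open LineArrangement in
theorem stmt5_general (n m f : ℕ)
    (t : ℕ → ℕ) (ht0 : ∀ k, ¬(2 ≤ k ∧ k ≤ m) → t k = 0)
    (hpairs : (n : ℝ) * (n - 1) = ∑ k ∈ Finset.Icc 2 m, (k : ℝ) * (k - 1) * t k)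
    (hf : (f : ℝ) = 1 + ∑ k ∈ Finset.Icc 2 m, ((k : ℝ) - 1) * t k)
    (hboj : (n : ℝ) ≤ t 2 + (3 / 4) * t 3
      + ∑ k ∈ Finset.Icc 5 m, ((k : ℝ) - (k : ℝ) ^ 2 / 4) * t k) :
    (n : ℝ) ^ 2 / 6 ≤ (f : ℝ) := by
  replace hboj : (n : ℝ) ≤ ∑ k ∈ Icc 2 m, bojanowskiWeight k * t k :=
    hboj.trans_eq (sum_bojanowskiWeight_eq fun k hk => ht0 k (by omega)).symm
  have hcombine : (∑ k ∈ Icc 2 m, (k : ℝ) * (k - 1) * t k) / 6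
      + 2 / 3 * ∑ k ∈ Icc 2 m, bojanowskiWeight k * t k
      ≤ ∑ k ∈ Icc 2 m, ((k : ℝ) - 1) * t k := by
    rw [sum_div, mul_sum, ← sum_add_distrib]
    refine sum_le_sum fun k hk => ?_
    have hterm := mul_le_mul_of_nonneg_right
      (pairs_div_six_add_bojanowskiWeight_le (mem_Icc.mp hk).1) (Nat.cast_nonneg (α := ℝ) (t k))
    linarith
  linarith [Nat.cast_nonneg (α := ℝ) n]

theorem stmt5 (n m f : ℕ) (hn : 2 ≤ n) (hm : 2 ≤ m) (hmn : (m : ℝ) ≤ 2 / 3 * n)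
    (t : ℕ → ℕ) (ht0 : ∀ k, ¬(2 ≤ k ∧ k ≤ m) → t k = 0)
    (hpairs : (n : ℝ) * (n - 1) = ∑ k ∈ Finset.Icc 2 m, (k : ℝ) * (k - 1) * t k)
    (hf : (f : ℝ) = 1 + ∑ k ∈ Finset.Icc 2 m, ((k : ℝ) - 1) * t k)
    (hboj : (n : ℝ) ≤ t 2 + (3 / 4) * t 3
      + ∑ k ∈ Finset.Icc 5 m, ((k : ℝ) - (k : ℝ) ^ 2 / 4) * t k) :
    (n : ℝ) ^ 2 / 6 ≤ (f : ℝ) :=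
  stmt5_general n m f t ht0 hpairs hf hboj
end

section
/- Let n, m be integers with 5 ≤ m and m ≤ (2/3)n, and let t : ℕ → ℕ satisfy t_k = 0 unless 2 ≤ k ≤ m. Assume n(n-1) = Σ_{k=2}^{m} k(k-1) t_k and t₂ + (3/4)t₃ + Σ_{k=5}^{m}(k - k²/4) t_k ≥ n. Then Σ_{k=2}^{m} (k-1) t_k ≥ (m+2)n(n-1)/(6m) + 2(m-1)n/(3m). -/
/-!
Bojanowski's inequality is `∑ (k - k²/4) t_k ≥ n` over all `2 ≤ k ≤ m`, its weights at `k = 2, 3, 4`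
being `1, 3/4, 0`. Adding `c₁` times the pair count and `c₂` times this inequality bounds the
target from below termwise: `t_k` gets coefficient `c₁ k(k-1) + c₂ (k - k²/4)`, which falls short
of `k - 1` by `(k - 2)(m - k)/(2m) ≥ 0`.
-/

open Finset

lemma sum_Icc_two_eq_bojanowski (m : ℕ) (hm : 4 ≤ m) (f : ℕ → ℝ) :
    ∑ k ∈ Icc 2 m, ((k : ℝ) - (k : ℝ) ^ 2 / 4) * f k
      = f 2 + 3 / 4 * f 3 + ∑ k ∈ Icc 5 m, ((k : ℝ) - (k : ℝ) ^ 2 / 4) * f k := by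
  have hsplit : Icc 2 m = {2, 3, 4} ∪ Icc 5 m := by
    ext k
    simp only [mem_union, mem_insert, mem_singleton, mem_Icc]
    omega
  rw [hsplit, sum_union (by simp [disjoint_left])]
  norm_num [sum_insert]

lemma pair_bojanowski_combination_le (m k : ℝ) (hk : 2 ≤ k) (hkm : k ≤ m) :
    (m + 2) / (6 * m) * (k * (k - 1)) + 2 * (m - 1) / (3 * m) * (k - k ^ 2 / 4) ≤ k - 1 := by
  have hm : 0 < m := by linarith
  have hgap : k - 1 - ((m + 2) / (6 * m) * (k * (k - 1)) + 2 * (m - 1) / (3 * m) * (k - k ^ 2 / 4))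
      = (k - 2) * (m - k) / (2 * m) := by
    field_simp
    ring
  have : 0 ≤ (k - 2) * (m - k) / (2 * m) := by
    apply div_nonneg (mul_nonneg _ _) <;> linarith
  linarith

theorem stmt9_general (n m : ℕ) (hm : 5 ≤ m)
    (t : ℕ → ℕ)
    (hpairs : (n : ℝ) * (n - 1) = ∑ k ∈ Finset.Icc 2 m, (k : ℝ) * (k - 1) * t k)
    (hboj : (n : ℝ) ≤ t 2 + (3 / 4) * t 3
      + ∑ k ∈ Finset.Icc 5 m, ((k : ℝ) - (k : ℝ) ^ 2 / 4) * t k) :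
    ((m : ℝ) + 2) * n * (n - 1) / (6 * m) + 2 * ((m : ℝ) - 1) * n / (3 * m)
      ≤ ∑ k ∈ Finset.Icc 2 m, ((k : ℝ) - 1) * t k := by
  set c₁ : ℝ := (m + 2) / (6 * m)
  set c₂ : ℝ := 2 * (m - 1) / (3 * m)
  have hm₁ : (1 : ℝ) ≤ m := by exact_mod_cast (by omega : 1 ≤ m)
  rw [← sum_Icc_two_eq_bojanowski m (by omega) (fun k ↦ (t k : ℝ))] at hboj
  calc ((m : ℝ) + 2) * n * (n - 1) / (6 * m) + 2 * ((m : ℝ) - 1) * n / (3 * m)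
      = c₁ * (n * (n - 1)) + c₂ * n := by ring
    _ ≤ c₁ * (n * (n - 1)) + c₂ * ∑ k ∈ Icc 2 m, ((k : ℝ) - (k : ℝ) ^ 2 / 4) * t k :=
        by gcongr
    _ = ∑ k ∈ Icc 2 m, (c₁ * (k * (k - 1)) + c₂ * (k - k ^ 2 / 4)) * t k := by
        rw [hpairs, mul_sum, mul_sum, ← sum_add_distrib]
        exact sum_congr rfl fun k _ ↦ by ring
    _ ≤ ∑ k ∈ Icc 2 m, ((k : ℝ) - 1) * t k := by
        refine sum_le_sum fun k hk ↦ mul_le_mul_of_nonneg_right ?_ (Nat.cast_nonneg _)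
        obtain ⟨hk2, hkm⟩ := mem_Icc.mp hk
        exact pair_bojanowski_combination_le m k (by exact_mod_cast hk2) (by exact_mod_cast hkm)

theorem stmt9 (n m : ℕ) (hm : 5 ≤ m) (hmn : (m : ℝ) ≤ 2 / 3 * n)
    (t : ℕ → ℕ) (ht0 : ∀ k, ¬(2 ≤ k ∧ k ≤ m) → t k = 0)
    (hpairs : (n : ℝ) * (n - 1) = ∑ k ∈ Finset.Icc 2 m, (k : ℝ) * (k - 1) * t k)
    (hboj : (n : ℝ) ≤ t 2 + (3 / 4) * t 3
      + ∑ k ∈ Finset.Icc 5 m, ((k : ℝ) - (k : ℝ) ^ 2 / 4) * t k) :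
    ((m : ℝ) + 2) * n * (n - 1) / (6 * m) + 2 * ((m : ℝ) - 1) * n / (3 * m)
      ≤ ∑ k ∈ Finset.Icc 2 m, ((k : ℝ) - 1) * t k :=
  stmt9_general n m hm t hpairs hboj
end

section
/- For all integers m and n with 7 ≤ m ≤ n/5, we have ((m+2)n² + (3m-6)n)/(6m) + 1 ≥ 2(n² - n + 2m)/(m+3). -/
theorem stmt16 (m n : ℤ) (hm : 7 ≤ m) (hmn : (m : ℝ) ≤ n / 5) :
    2 * ((n : ℝ) ^ 2 - n + 2 * m) / (m + 3)
      ≤ ((m + 2) * (n : ℝ) ^ 2 + (3 * m - 6) * n) / (6 * m) + 1 := by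
  have hm' : (7 : ℝ) ≤ m := by exact_mod_cast hm
  have hn : (35 : ℝ) ≤ n := by linarith
  have h1 : (0 : ℝ) < m + 3 := by linarith
  have h2 : (0 : ℝ) < 6 * m := by linarith
  rw [div_add' _ _ _ (ne_of_gt h2), div_le_div_iff₀ h1 h2]
  nlinarith [sq_nonneg ((n:ℝ) - 35), mul_nonneg (sub_nonneg.2 hm') (sq_nonneg ((n:ℝ))),
    mul_nonneg (mul_nonneg (by linarith : (0:ℝ) ≤ (m:ℝ) - 6) (by linarith : (0:ℝ) ≤ (n:ℝ) - 5*m)) (by linarith : (0:ℝ) ≤ (n:ℝ)),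
    mul_nonneg (by linarith : (0:ℝ) ≤ (m:ℝ) - 1) (by linarith : (0:ℝ) ≤ (n:ℝ) - 5*m),
    mul_nonneg (mul_nonneg (by linarith : (0:ℝ) ≤ (m:ℝ) - 1) (by linarith : (0:ℝ) ≤ (m:ℝ) - 6)) (sq_nonneg ((n:ℝ) - 5*m)),
    mul_nonneg (mul_nonneg (by linarith : (0:ℝ) ≤ (m:ℝ) - 1) (by linarith : (0:ℝ) ≤ (m:ℝ))) (by linarith : (0:ℝ) ≤ (n:ℝ) - 5*m),
    mul_pos (by linarith : (0:ℝ) < (m:ℝ) - 1) (by linarith : (0:ℝ) < (m:ℝ))]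
end
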